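/- An integral domain R is a Dedekind domain if and only if every nonzero proper ideal of R is a product of prime ideals. -/

import Mathlib

/-!
Dedekind domains have unique factorization of ideals. Conversely (Zariski–Samuel), a
factorization into prime ideals of an invertible ideal is unique: a minimal factor on one side
occurs on the other and can be cancelled. For an invertible prime `P` and `a ∉ P` with
`P + (a) ≠ A`, factor `P + (a)` and `P + (a²)` and reduce modulo `P`: the images are nonzero
principal ideals of the domain `A ⧸ P`, hence invertible, so uniqueness there gives
`P + (a²) = (P + (a))²`. Then `P ⊆ P (P + (a))`, and cancelling `P` gives `P + (a) = A`, a
contradiction; so invertible primes are maximal. A nonzero prime `P` contains a factor `Q` of a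
nonzero principal ideal `(a) ⊆ P`; `Q` is invertible, hence maximal, hence `Q = P`. So every
nonzero ideal is invertible, which characterises Dedekind domains.
-/

open FractionalIdeal nonZeroDivisors Ideal UniqueFactorizationMonoid

def HasPrimeIdealFactorization (A : Type*) [CommRing A] : Prop :=
  ∀ I : Ideal A, I ≠ ⊥ → I ≠ ⊤ →
    ∃ s : Multiset (Ideal A), (∀ P ∈ s, P.IsPrime) ∧ I = s.prod

theorem IsDedekindDomain.hasPrimeIdealFactorization {A : Type*} [CommRing A]
    [IsDedekindDomain A] : HasPrimeIdealFactorization A := fun I hI _ =>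
  ⟨normalizedFactors I, fun P hP => isPrime_of_prime (prime_of_normalized_factor P hP),
    (Ideal.prod_normalizedFactors_eq_self hI).symm⟩

section

variable {A : Type*} [CommRing A] (K : Type*) [Field K] [Algebra A K] [IsFractionRing A K]

theorem FractionalIdeal.isUnit_coeIdeal_of_dvd {S : Submonoid A} {P : Type*} [CommRing P]
    [Algebra A P] {I J : Ideal A} (hIJ : I ∣ J) (hJ : IsUnit (J : FractionalIdeal S P)) :
    IsUnit (I : FractionalIdeal S P) :=
  isUnit_of_dvd_unit (map_dvd (coeIdealHom S P) hIJ) hJ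

theorem FractionalIdeal.isUnit_coeIdeal_span_singleton [IsDomain A] {a : A} (ha : a ≠ 0) :
    IsUnit ((span {a} : Ideal A) : FractionalIdeal A⁰ K) :=
  (mul_inv_cancel_iff_isUnit K).mp (coe_ideal_span_singleton_mul_inv K ha)

theorem Ideal.eq_top_of_le_mul_of_isUnit {P I : Ideal A}
    (hP : IsUnit (P : FractionalIdeal A⁰ K)) (h : P ≤ P * I) : I = ⊤ := by
  obtain ⟨u, hu⟩ := hP
  have h1 : (1 : FractionalIdeal A⁰ K) ≤ I := by
    have := mul_le_mul_right ((coeIdeal_le_coeIdeal K).mpr h) (↑u⁻¹ : FractionalIdeal A⁰ K)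
    rwa [coeIdeal_mul, ← hu, ← mul_assoc, Units.inv_mul, one_mul] at this
  rwa [← coeIdeal_top, coeIdeal_le_coeIdeal, top_le_iff] at h1

theorem Ideal.eq_of_multiset_prod_eq_of_isUnit {s t : Multiset (Ideal A)}
    (hs : ∀ P ∈ s, P.IsPrime) (ht : ∀ Q ∈ t, Q.IsPrime) (h : s.prod = t.prod)
    (hu : IsUnit ((s.prod : Ideal A) : FractionalIdeal A⁰ K)) : s = t := by
  classical
  induction s using Multiset.strongInductionOn generalizing t with
  | ih s IH =>
  rcases s.empty_or_exists_mem with rfl | ⟨P₀, hP₀⟩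
  · refine (Multiset.eq_zero_of_forall_notMem fun Q hQ => (ht Q hQ).ne_top ?_).symm
    simpa [← h] using le_of_dvd (Multiset.dvd_prod hQ)
  obtain ⟨P, hPs, hPmin⟩ :=
    s.toFinset.exists_minimal ⟨P₀, Multiset.mem_toFinset.mpr hP₀⟩
  rw [Multiset.mem_toFinset] at hPs
  -- by minimality of `P` in `s`, the factor `Q ≤ P` of `t` found by primality is `P` itself
  obtain ⟨Q, hQt, hQP⟩ :=
    (hs P hPs).multiset_prod_le.mp (h ▸ le_of_dvd (Multiset.dvd_prod hPs))
  obtain ⟨P', hP's, hP'Q⟩ :=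
    (ht Q hQt).multiset_prod_le.mp (h ▸ le_of_dvd (Multiset.dvd_prod hQt))
  obtain rfl : Q = P :=
    le_antisymm hQP ((hPmin (Multiset.mem_toFinset.mpr hP's) (hP'Q.trans hQP)).trans hP'Q)
  obtain ⟨s', rfl⟩ := Multiset.exists_cons_of_mem hPs
  obtain ⟨t', rfl⟩ := Multiset.exists_cons_of_mem hQt
  simp only [Multiset.prod_cons] at h hu
  have hcancel : s'.prod = t'.prod := by
    refine coeIdeal_injective (K := K) ?_
    refine (isUnit_coeIdeal_of_dvd (dvd_mul_right Q _) hu).mul_left_cancel ?_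
    simpa only [← coeIdeal_mul] using congrArg _ h
  rw [IH s' (Multiset.lt_cons_self s' Q) (fun P hP => hs P (Multiset.mem_cons_of_mem hP))
    (fun P hP => ht P (Multiset.mem_cons_of_mem hP)) hcancel
    (isUnit_coeIdeal_of_dvd (dvd_mul_left _ Q) hu)]

theorem Ideal.eq_of_map_multiset_prod_eq_of_isUnit {B : Type*} [CommRing B] (L : Type*)
    [Field L] [Algebra B L] [IsFractionRing B L] {f : A →+* B} (hf : Function.Surjective f)
    {s t : Multiset (Ideal A)} (hs : ∀ P ∈ s, P.IsPrime ∧ RingHom.ker f ≤ P)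
    (ht : ∀ Q ∈ t, Q.IsPrime ∧ RingHom.ker f ≤ Q) (h : s.prod.map f = t.prod.map f)
    (hu : IsUnit ((s.prod.map f : Ideal B) : FractionalIdeal B⁰ L)) : s = t := by
  have hmap (u : Multiset (Ideal A)) : u.prod.map f = (u.map (map f)).prod :=
    map_multiset_prod (mapHom f) u
  have hprime (u : Multiset (Ideal A)) (hu : ∀ P ∈ u, P.IsPrime ∧ RingHom.ker f ≤ P) :
      ∀ P ∈ u.map (map f), P.IsPrime := by
    intro _ hP
    obtain ⟨Q, hQ, rfl⟩ := Multiset.mem_map.mp hP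
    have := (hu Q hQ).1
    exact map_isPrime_of_surjective hf (hu Q hQ).2
  have hcomap (u : Multiset (Ideal A)) (hu : ∀ P ∈ u, P.IsPrime ∧ RingHom.ker f ≤ P) :
      (u.map (map f)).map (comap f) = u := by
    rw [Multiset.map_map]
    conv_rhs => rw [← Multiset.map_id u]
    exact Multiset.map_congr rfl fun Q hQ => by
      simp [comap_map_of_surjective' f hf, (hu Q hQ).2]
  rw [← hcomap s hs, ← hcomap t ht, eq_of_multiset_prod_eq_of_isUnit L (hprime s hs)
    (hprime t ht) (by rwa [← hmap, ← hmap]) (by rwa [← hmap])]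

theorem Ideal.IsPrime.inf_span_singleton_mul_le {P : Ideal A} (hP : P.IsPrime) {a : A}
    (ha : a ∉ P) (b : A) : P ⊓ span {a * b} ≤ P * span {a} := by
  rintro _ ⟨hy, hy'⟩
  obtain ⟨r, rfl⟩ := mem_span_singleton'.mp hy'
  rw [mul_comm a b, ← mul_assoc] at hy ⊢
  have hrb : r * b ∈ P := (hP.mem_or_mem hy).resolve_right ha
  exact mul_mem_mul hrb (mem_span_singleton_self a)

theorem Ideal.IsPrime.le_mul_sup_span_singleton {P : Ideal A} (hP : P.IsPrime) {a : A}
    (ha : a ∉ P) (hsq : P ≤ (P ⊔ span {a}) ^ 2) : P ≤ P * (P ⊔ span {a}) := by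
  set J := span {a}
  have hexpand : (P ⊔ J) ^ 2 ≤ P * (P ⊔ J) ⊔ J * J := by
    rw [sq, sup_mul, Ideal.mul_sup J P J, mul_comm J P]
    exact sup_le le_sup_left
      (sup_le (le_sup_of_le_left (mul_mono_right le_sup_right)) le_sup_right)
  calc P = (P * (P ⊔ J) ⊔ J * J) ⊓ P := (inf_eq_right.mpr (hsq.trans hexpand)).symm
    _ = P * (P ⊔ J) ⊔ J * J ⊓ P := sup_inf_assoc_of_le _ Ideal.mul_le_left
    _ ≤ P * (P ⊔ J) := by
      refine sup_le le_rfl ?_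
      rw [inf_comm, span_singleton_mul_span_singleton]
      exact (hP.inf_span_singleton_mul_le ha a).trans (mul_mono_right le_sup_right)

theorem Ideal.map_quotient_mk_sup_span_singleton (P : Ideal A) (b : A) :
    (P ⊔ span {b}).map (Ideal.Quotient.mk P) = span {Ideal.Quotient.mk P b} := by
  rw [map_sup, map_quotient_self, bot_sup_eq, map_span, Set.image_singleton]

theorem HasPrimeIdealFactorization.sup_span_singleton_pow_two
    (h : HasPrimeIdealFactorization A) {P : Ideal A} [P.IsPrime] {a : A} (ha : a ∉ P)
    (hPa : P ⊔ span {a} ≠ ⊤) : P ⊔ span {a ^ 2} = (P ⊔ span {a}) ^ 2 := by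
  have hne_bot {b : A} (hb : b ∉ P) : P ⊔ span {b} ≠ ⊥ :=
    ne_bot_of_le_ne_bot (span_singleton_eq_bot.not.mpr fun h0 => hb (by simp [h0])) le_sup_right
  have ha2 : a ^ 2 ∉ P := fun h2 => ha (IsPrime.mem_of_pow_mem ‹_› 2 h2)
  have hle : P ⊔ span {a ^ 2} ≤ P ⊔ span {a} :=
    sup_le_sup_left (span_singleton_le_span_singleton.mpr (dvd_pow_self a two_ne_zero)) P
  obtain ⟨s, hs, hs_eq⟩ := h _ (hne_bot ha) hPa
  obtain ⟨t, ht, ht_eq⟩ := h _ (hne_bot ha2) (ne_top_of_le_ne_top hPa hle)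
  have hfactors {u : Multiset (Ideal A)} {b : A} (hu : ∀ Q ∈ u, Q.IsPrime)
      (hu_eq : P ⊔ span {b} = u.prod) :
      ∀ Q ∈ u, Q.IsPrime ∧ RingHom.ker (Ideal.Quotient.mk P) ≤ Q := fun Q hQ =>
    ⟨hu Q hQ, mk_ker.trans_le
      ((le_sup_left.trans hu_eq.le).trans (le_of_dvd (Multiset.dvd_prod hQ)))⟩
  have hts : t = 2 • s := by
    refine eq_of_map_multiset_prod_eq_of_isUnit (FractionRing (A ⧸ P))
      Ideal.Quotient.mk_surjective (hfactors ht ht_eq)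
      (fun Q hQ => hfactors hs hs_eq Q (Multiset.mem_nsmul.mp hQ).2) ?_ ?_
    · rw [Multiset.prod_nsmul, Ideal.map_pow, ← ht_eq, ← hs_eq,
        map_quotient_mk_sup_span_singleton, map_quotient_mk_sup_span_singleton, map_pow,
        span_singleton_pow]
    · rw [← ht_eq, map_quotient_mk_sup_span_singleton]
      exact isUnit_coeIdeal_span_singleton _ (by rwa [ne_eq, Quotient.eq_zero_iff_mem])
  rw [ht_eq, hts, Multiset.prod_nsmul, hs_eq]

theorem HasPrimeIdealFactorization.isMaximal_of_isUnit (h : HasPrimeIdealFactorization A)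
    {P : Ideal A} [hP : P.IsPrime] (hPu : IsUnit (P : FractionalIdeal A⁰ K)) :
    P.IsMaximal := by
  have hcoprime (a : A) (ha : a ∉ P) : P ⊔ span {a} = ⊤ := by
    by_contra hne
    have hsq : P ≤ (P ⊔ span {a}) ^ 2 := h.sup_span_singleton_pow_two ha hne ▸ le_sup_left
    exact hne (eq_top_of_le_mul_of_isUnit K hPu (hP.le_mul_sup_span_singleton ha hsq))
  refine isMaximal_iff.mpr ⟨(ne_top_iff_one P).mp hP.ne_top, fun J x hPJ hxP hxJ => ?_⟩
  rw [← eq_top_iff_one, eq_top_iff, ← hcoprime x hxP]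
  exact sup_le hPJ ((span_singleton_le_iff_mem J).mpr hxJ)

theorem HasPrimeIdealFactorization.isUnit_of_isPrime [IsDomain A]
    (h : HasPrimeIdealFactorization A) {P : Ideal A} [hP : P.IsPrime] (hP0 : P ≠ ⊥) :
    IsUnit (P : FractionalIdeal A⁰ K) := by
  obtain ⟨a, haP, ha0⟩ := Submodule.exists_mem_ne_zero_of_ne_bot hP0
  have hle : span {a} ≤ P := (span_singleton_le_iff_mem P).mpr haP
  obtain ⟨s, hs, hs_eq⟩ :=
    h _ (span_singleton_eq_bot.not.mpr ha0) (ne_top_of_le_ne_top hP.ne_top hle)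
  have hsu : IsUnit (s.prod : FractionalIdeal A⁰ K) :=
    hs_eq ▸ isUnit_coeIdeal_span_singleton K ha0
  obtain ⟨Q, hQs, hQP⟩ := hP.multiset_prod_le.mp (hs_eq ▸ hle)
  have hQu := isUnit_coeIdeal_of_dvd (Multiset.dvd_prod hQs) hsu
  have := hs Q hQs
  rwa [(h.isMaximal_of_isUnit K hQu).eq_of_le hP.ne_top hQP] at hQu

theorem HasPrimeIdealFactorization.isUnit_coeIdeal [IsDomain A]
    (h : HasPrimeIdealFactorization A) {I : Ideal A} (hI : I ≠ ⊥) :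
    IsUnit (I : FractionalIdeal A⁰ K) := by
  rcases eq_or_ne I ⊤ with rfl | hI_top
  · rw [coeIdeal_top]
    exact isUnit_one
  obtain ⟨s, hs, rfl⟩ := h I hI hI_top
  rw [← coeIdealHom_apply, map_multiset_prod]
  refine Multiset.prod_induction _ _ (fun _ _ => IsUnit.mul) isUnit_one fun _ hQ => ?_
  obtain ⟨Q, hQs, rfl⟩ := Multiset.mem_map.mp hQ
  have := hs Q hQs
  exact h.isUnit_of_isPrime K fun hQ0 =>
    hI (eq_bot_iff.mpr (hQ0 ▸ le_of_dvd (Multiset.dvd_prod hQs)))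

theorem isDedekindDomain_of_forall_isUnit_coeIdeal [IsDomain A]
    (h : ∀ I : Ideal A, I ≠ ⊥ → IsUnit (I : FractionalIdeal A⁰ K)) :
    IsDedekindDomain A := by
  refine (isDedekindDomain_iff_mul_inv_cancel (K := K)).mpr fun I hI => ?_
  rw [mul_inv_cancel_iff_isUnit]
  obtain ⟨a, J, ha, rfl⟩ := exists_eq_spanSingleton_mul I
  have hJ : J ≠ ⊥ := by
    rintro rfl
    simp at hI
  have ha' : (algebraMap A K a)⁻¹ ≠ 0 :=
    inv_ne_zero ((map_ne_zero_iff _ (IsFractionRing.injective A K)).mpr ha)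
  exact ((mul_inv_cancel_iff_isUnit K).mp (spanSingleton_mul_inv K ha')).mul (h J hJ)

end

theorem dedekind_iff_prime_factorization_general (R : Type*) [CommRing R] [IsDomain R] :
    IsDedekindDomain R ↔
      ∀ I : Ideal R, I ≠ ⊥ → I ≠ ⊤ →
        ∃ s : Multiset (Ideal R), (∀ P ∈ s, P.IsPrime) ∧ I = s.prod :=
  ⟨fun _ => IsDedekindDomain.hasPrimeIdealFactorization,
    fun (h : HasPrimeIdealFactorization R) =>
      isDedekindDomain_of_forall_isUnit_coeIdeal (FractionRing R) fun _ =>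
        h.isUnit_coeIdeal (FractionRing R)⟩

theorem dedekind_iff_prime_factorization (R : Type*) [CommRing R] [IsDomain R]
    (hR : ¬ IsField R) :
    IsDedekindDomain R ↔
      ∀ I : Ideal R, I ≠ ⊥ → I ≠ ⊤ →
        ∃ s : Multiset (Ideal R), (∀ P ∈ s, P.IsPrime) ∧ I = s.prod :=
  dedekind_iff_prime_factorization_general R
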